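/- Let K be a field and let A be a right prolongable monomial algebra on generators x_1,…,x_d over K such that for every D ∈ ℕ there exists a nonzero monomial u of A with at most one monomial v of length D satisfying uv ≠ 0. Then for every finite-dimensional generating subspace V ≤ A with 1 ∈ V there exists a constant C such that I_{A,V}(n) ≤ C for all n ≥ 1; that is, the isoperimetric profile of A is asymptotically constant. -/

import Mathlib

/-!
Choose `E` such that `V` lies in the span of the monomials of length at most `E`. Given `n`, the
hypothesis at length `D = n + E` yields a nonzero monomial `q` having a single nonzero right
extension by a word of length `D`, say `q s`. By right prolongability every nonzero extension
`q m` with `|m| ≤ D` extends further to length `D`, so `m` is a prefix of `s`. Hence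
`W = span {q s_{<j} : j < n}` (with `s_{<j}` the prefix of length `j`) satisfies
`W + W V ⊆ span {q s_{<j} : j < n + E}`. Distinct nonzero monomials of a monomial algebra are
linearly independent, so these spaces have dimensions `n` and `n + E`, and `I(n) ≤ E`.
-/

noncomputable section

namespace Paper

open Module Filter MulOpposite

/-- The free associative unital `K`-algebra on a set `σ` of generators,
realized as the monoid algebra of the free monoid on `σ`. -/
abbrev FreeAlg (K : Type) [Field K] (σ : Type) : Type := MonoidAlgebra K (FreeMonoid σ)

/-- The monomial of the free algebra corresponding to a word `w`. -/
def wrd (K : Type) [Field K] {σ : Type} (w : List σ) : FreeAlg K σ :=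
  MonoidAlgebra.of K (FreeMonoid σ) (FreeMonoid.ofList w)

variable (K : Type) [Field K]

section Defs

variable {σ : Type} {A : Type} [Ring A] [Algebra K A]

/-- `a` is a monomial of `A` (i.e. the image of a word under the presentation `π`). -/
def IsMono (π : FreeAlg K σ →ₐ[K] A) (a : A) : Prop :=
  ∃ w : List σ, a = π (wrd K w)

/-- `a` is a monomial of `A` of length `D`. -/
def IsMonoLen (π : FreeAlg K σ →ₐ[K] A) (D : ℕ) (a : A) : Prop :=
  ∃ w : List σ, w.length = D ∧ a = π (wrd K w)

/-- `π` presents `A` as a monomial algebra: `π` is onto and its kernel is spanned by the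
monomials it contains (equivalently, it is generated as a two-sided ideal by monomials). -/
def MonomialPresentation (π : FreeAlg K σ →ₐ[K] A) : Prop :=
  Function.Surjective π ∧
    ∀ a : FreeAlg K σ, π a = 0 ↔
      a ∈ Submodule.span K {m : FreeAlg K σ | ∃ w : List σ, m = wrd K w ∧ π (wrd K w) = 0}

/-- Every nonzero monomial of `A` is right prolongable. -/
def RightProlongable (π : FreeAlg K σ →ₐ[K] A) : Prop :=
  ∀ a : A, IsMono K π a → a ≠ 0 → ∃ w : List σ, w ≠ [] ∧ a * π (wrd K w) ≠ 0

/-- A subspace of `A` spanned by monomials. -/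
def MonomialSubspace (π : FreeAlg K σ →ₐ[K] A) (L : Submodule K A) : Prop :=
  ∃ S : Set (List σ), L = Submodule.span K ((fun w => π (wrd K w)) '' S)

/-- The standard generating subspace, spanned by `1` together with the generators. -/
def genV (π : FreeAlg K σ →ₐ[K] A) : Submodule K A :=
  Submodule.span K ({1} ∪ Set.range fun i : σ => π (wrd K [i]))

end Defs

section Amen

/-- `L` is a `(V, ε)`-invariant subspace of `A`, viewed as a right module over itself:
`dim (L·V) < (1+ε) · dim L`. -/
def RInv {A : Type} [Ring A] [Algebra K A] (L V : Submodule K A) (ε : ℝ) : Prop :=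
  FiniteDimensional K L ∧ FiniteDimensional K (L * V : Submodule K A) ∧
    (finrank K (L * V : Submodule K A) : ℝ) < (1 + ε) * (finrank K L : ℝ)

/-- `L` is a `(V, ε)`-invariant subspace of `A`, viewed as a left module over itself. -/
def LInv {A : Type} [Ring A] [Algebra K A] (L V : Submodule K A) (ε : ℝ) : Prop :=
  FiniteDimensional K L ∧ FiniteDimensional K (V * L : Submodule K A) ∧
    (finrank K (V * L : Submodule K A) : ℝ) < (1 + ε) * (finrank K L : ℝ)

/-- `A` is amenable as a right module over itself. -/
def RightSelfAmenable (A : Type) [Ring A] [Algebra K A] : Prop :=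
  ∀ V : Submodule K A, FiniteDimensional K V → ∀ ε : ℝ, 0 < ε →
    ∃ L : Submodule K A, RInv K L V ε

/-- `A` is exhaustively amenable as a right module over itself. -/
def RightSelfExhAmenable (A : Type) [Ring A] [Algebra K A] : Prop :=
  ∀ V : Submodule K A, FiniteDimensional K V → ∀ ε : ℝ, 0 < ε →
    ∀ W : Submodule K A, FiniteDimensional K W →
      ∃ L : Submodule K A, W ≤ L ∧ RInv K L V ε

/-- `A` is exhaustively amenable as a left module over itself. -/
def LeftSelfExhAmenable (A : Type) [Ring A] [Algebra K A] : Prop :=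
  ∀ V : Submodule K A, FiniteDimensional K V → ∀ ε : ℝ, 0 < ε →
    ∀ W : Submodule K A, FiniteDimensional K W →
      ∃ L : Submodule K A, W ≤ L ∧ LInv K L V ε

/-- For a right `A`-module `M` (encoded via an `Aᵐᵒᵖ`-action), the subspace `L·V`,
spanned by `{ℓ·v : ℓ ∈ L, v ∈ V}`. -/
def rLV {A M : Type} [Ring A] [Algebra K A] [AddCommGroup M] [Module K M] [Module Aᵐᵒᵖ M]
    (L : Submodule K M) (V : Submodule K A) : Submodule K M :=
  Submodule.span K {x : M | ∃ l ∈ L, ∃ v ∈ V, x = (op v) • l}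

/-- `L` is a `(V, ε)`-invariant subspace of the right `A`-module `M`. -/
def RModInv {A M : Type} [Ring A] [Algebra K A] [AddCommGroup M] [Module K M] [Module Aᵐᵒᵖ M]
    (L : Submodule K M) (V : Submodule K A) (ε : ℝ) : Prop :=
  FiniteDimensional K L ∧ FiniteDimensional K (rLV K L V) ∧
    (finrank K (rLV K L V) : ℝ) < (1 + ε) * (finrank K L : ℝ)

/-- The right `A`-module `M` is amenable. -/
def RModAmenable (A M : Type) [Ring A] [Algebra K A] [AddCommGroup M] [Module K M]
    [Module Aᵐᵒᵖ M] [IsScalarTower K Aᵐᵒᵖ M] : Prop :=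
  ∀ V : Submodule K A, FiniteDimensional K V → ∀ ε : ℝ, 0 < ε →
    ∃ L : Submodule K M, RModInv K L V ε

/-- The right `A`-module `M` is exhaustively amenable. -/
def RModExhAmenable (A M : Type) [Ring A] [Algebra K A] [AddCommGroup M] [Module K M]
    [Module Aᵐᵒᵖ M] [IsScalarTower K Aᵐᵒᵖ M] : Prop :=
  ∀ V : Submodule K A, FiniteDimensional K V → ∀ ε : ℝ, 0 < ε →
    ∀ W : Submodule K M, FiniteDimensional K W →
      ∃ L : Submodule K M, W ≤ L ∧ RModInv K L V ε

/-- For a left `A`-module `M`, the subspace `V·L`, spanned by `{v·ℓ : ℓ ∈ L, v ∈ V}`. -/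
def lVL {A M : Type} [Ring A] [Algebra K A] [AddCommGroup M] [Module K M] [Module A M]
    (L : Submodule K M) (V : Submodule K A) : Submodule K M :=
  Submodule.span K {x : M | ∃ l ∈ L, ∃ v ∈ V, x = v • l}

/-- `L` is a `(V, ε)`-invariant subspace of the left `A`-module `M`. -/
def LModInv {A M : Type} [Ring A] [Algebra K A] [AddCommGroup M] [Module K M] [Module A M]
    (L : Submodule K M) (V : Submodule K A) (ε : ℝ) : Prop :=
  FiniteDimensional K L ∧ FiniteDimensional K (lVL K L V) ∧
    (finrank K (lVL K L V) : ℝ) < (1 + ε) * (finrank K L : ℝ)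

/-- The left `A`-module `M` is exhaustively amenable. -/
def LModExhAmenable (A M : Type) [Ring A] [Algebra K A] [AddCommGroup M] [Module K M]
    [Module A M] [IsScalarTower K A M] : Prop :=
  ∀ V : Submodule K A, FiniteDimensional K V → ∀ ε : ℝ, 0 < ε →
    ∀ W : Submodule K M, FiniteDimensional K W →
      ∃ L : Submodule K M, W ≤ L ∧ LModInv K L V ε

/-- A Følner sequence for `A` as a right module over itself, with respect to the
generating subspace `V`. -/
def FolnerSeq {A : Type} [Ring A] [Algebra K A] (V : Submodule K A)
    (L : ℕ → Submodule K A) : Prop :=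
  Monotone L ∧ (∀ n, FiniteDimensional K (L n)) ∧ (⨆ n, L n) = (⊤ : Submodule K A) ∧
    Tendsto (fun n => (finrank K (L n * V : Submodule K A) : ℝ) / (finrank K (L n) : ℝ))
      atTop (nhds 1)

/-- The isoperimetric profile of `A` with respect to `V`:
`I(n) = inf {dim((W·V + W)/W) : dim W = n}`. -/
def isoProfile {A : Type} [Ring A] [Algebra K A] (V : Submodule K A) (n : ℕ) : ℕ :=
  sInf {k : ℕ | ∃ W : Submodule K A, FiniteDimensional K W ∧ finrank K W = n ∧
    FiniteDimensional K (W ⊔ W * V : Submodule K A) ∧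
    k = finrank K (W ⊔ W * V : Submodule K A) - finrank K W}

end Amen

section Words

variable {σ : Type}

/-- The shift on bi-infinite words. -/
def shiftZ (s : ℤ → σ) : ℤ → σ := fun n => s (n + 1)

/-- The word `u` occurs in the bi-infinite word `s` at position `k`. -/
def OccursAt (u : List σ) (s : ℤ → σ) (k : ℤ) : Prop :=
  ∀ i : Fin u.length, s (k + (i : ℕ)) = u.get i

/-- `u` is a (finite) factor of the bi-infinite word `s`. -/
def FactorZ (u : List σ) (s : ℤ → σ) : Prop := ∃ k : ℤ, OccursAt u s k

/-- `u` is a factor of the subshift `X`. -/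
def FactorOfX (u : List σ) (X : Set (ℤ → σ)) : Prop := ∃ s ∈ X, FactorZ u s

/-- `s` is recurrent: every factor occurs at infinitely many positions. -/
def RecurrentZ (s : ℤ → σ) : Prop :=
  ∀ u : List σ, FactorZ u s → {k : ℤ | OccursAt u s k}.Infinite

/-- `s` is uniformly recurrent: for every factor `u` there is `N` such that every
factor of `s` of length `N` contains an occurrence of `u`. -/
def UnifRecurrentZ (s : ℤ → σ) : Prop :=
  ∀ u : List σ, FactorZ u s → ∃ N : ℕ, ∀ v : List σ, FactorZ v s → v.length = N → u <:+: v

/-- `X ⊆ σ^ℤ` is a subshift: nonempty, closed and shift-invariant. -/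
def IsSubshift [TopologicalSpace σ] (X : Set (ℤ → σ)) : Prop :=
  X.Nonempty ∧ IsClosed X ∧ ∀ s ∈ X, shiftZ s ∈ X

/-- `X` is a minimal subshift. -/
def IsMinimalSubshift [TopologicalSpace σ] (X : Set (ℤ → σ)) : Prop :=
  IsSubshift X ∧
    ∀ Y : Set (ℤ → σ), Y ⊆ X → IsClosed Y → (∀ s ∈ Y, shiftZ s ∈ Y) → Y = ∅ ∨ Y = X

/-- `X` is a transitive subshift: some element has dense shift-orbit. -/
def IsTransitiveSubshift [TopologicalSpace σ] (X : Set (ℤ → σ)) : Prop :=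
  IsSubshift X ∧ ∃ s ∈ X, closure {t : ℤ → σ | ∃ n : ℤ, t = fun m => s (m + n)} = X

/-- The word `u` occurs in the right-infinite word `s` at position `k`. -/
def OccursAtN (u : List σ) (s : ℕ → σ) (k : ℕ) : Prop :=
  ∀ i : Fin u.length, s (k + (i : ℕ)) = u.get i

/-- `u` is a factor of the right-infinite word `s`. -/
def FactorN (u : List σ) (s : ℕ → σ) : Prop := ∃ k : ℕ, OccursAtN u s k

/-- A right-infinite word is uniformly recurrent. -/
def UnifRecurrentN (s : ℕ → σ) : Prop :=
  ∀ u : List σ, FactorN u s → ∃ N : ℕ, ∀ v : List σ, FactorN v s → v.length = N → u <:+: v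

end Words

end Paper

namespace Paper

open Module

section MonomialAlgebra

variable {K : Type} [Field K] {σ : Type} {A : Type} [Ring A] [Algebra K A]
  {π : FreeAlg K σ →ₐ[K] A}

lemma wrd_append (a b : List σ) : wrd K (a ++ b) = wrd K a * wrd K b :=
  map_mul (MonoidAlgebra.of K (FreeMonoid σ)) (FreeMonoid.ofList a) (FreeMonoid.ofList b)

lemma map_wrd_append (π : FreeAlg K σ →ₐ[K] A) (a b : List σ) :
    π (wrd K (a ++ b)) = π (wrd K a) * π (wrd K b) := by
  rw [wrd_append, map_mul]

lemma map_wrd_ne_zero_of_append (π : FreeAlg K σ →ₐ[K] A) {a b : List σ}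
    (h : π (wrd K (a ++ b)) ≠ 0) : π (wrd K a) ≠ 0 := by
  rw [map_wrd_append] at h
  exact left_ne_zero_of_mul h

lemma _root_.MonoidAlgebra.disjoint_supported_supported {R M : Type*} [Semiring R]
    {s t : Set M} (h : Disjoint s t) :
    Disjoint (MonoidAlgebra.supported R R s) (MonoidAlgebra.supported R R t) := by
  rw [disjoint_iff, MonoidAlgebra.supported, MonoidAlgebra.supported, ← Submodule.comap_inf,
    (Finsupp.disjoint_supported_supported h).eq_bot, Submodule.comap_bot, LinearEquiv.ker]

lemma MonomialPresentation.ker_eq_supported (hπ : MonomialPresentation K π) :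
    LinearMap.ker π.toLinearMap =
      MonoidAlgebra.supported K K {x | π (MonoidAlgebra.single x (1 : K)) = 0} := by
  ext a
  rw [LinearMap.mem_ker, AlgHom.toLinearMap_apply, hπ.2, MonoidAlgebra.supported_eq_span_single]
  congr! 2
  ext m
  constructor
  · rintro ⟨w, rfl, hw⟩
    exact ⟨_, hw, rfl⟩
  · rintro ⟨x, hx, rfl⟩
    exact ⟨x.toList, rfl, hx⟩

lemma MonomialPresentation.linearIndependent (hπ : MonomialPresentation K π) {ι : Type}
    {q : ι → List σ} (hq : Function.Injective q) (h0 : ∀ i, π (wrd K (q i)) ≠ 0) :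
    LinearIndependent K (fun i => π (wrd K (q i))) := by
  have hwords : LinearIndependent K (fun i => wrd K (q i)) :=
    (MonoidAlgebra.basis (FreeMonoid σ) K).linearIndependent.comp _
      (FreeMonoid.ofList.injective.comp hq)
  refine hwords.map (f := π.toLinearMap) ?_
  rw [hπ.ker_eq_supported]
  refine Disjoint.mono_left ?_
    (MonoidAlgebra.disjoint_supported_supported disjoint_compl_left)
  rw [MonoidAlgebra.supported_eq_span_single]
  exact Submodule.span_mono (by rintro _ ⟨i, rfl⟩; exact ⟨_, h0 i, rfl⟩)

lemma MonomialPresentation.eq_of_map_wrd_eq (hπ : MonomialPresentation K π) {w w' : List σ}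
    (h : π (wrd K w) = π (wrd K w')) (h0 : π (wrd K w) ≠ 0) : w = w' := by
  have hpair :
      LinearIndependent K (fun x : ({w, w'} : Set (List σ)) => π (wrd K x)) := by
    refine hπ.linearIndependent Subtype.val_injective ?_
    rintro ⟨x, rfl | rfl⟩
    exacts [h0, h ▸ h0]
  exact congrArg Subtype.val
    (hpair.injective (a₁ := ⟨w, by simp⟩) (a₂ := ⟨w', by simp⟩) h)

lemma RightProlongable.exists_append_ne_zero (hprol : RightProlongable K π)
    {r : List σ} (hr : π (wrd K r) ≠ 0) (k : ℕ) :
    ∃ s : List σ, s.length = k ∧ π (wrd K (r ++ s)) ≠ 0 := by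
  induction k with
  | zero => exact ⟨[], rfl, by simpa using hr⟩
  | succ k ih =>
    obtain ⟨s, rfl, hs⟩ := ih
    obtain ⟨_ | ⟨c, w⟩, hw, hsw⟩ := hprol _ ⟨_, rfl⟩ hs
    · exact absurd rfl hw
    refine ⟨s ++ [c], by simp, map_wrd_ne_zero_of_append π (b := w) ?_⟩
    rw [← map_wrd_append] at hsw
    simpa using hsw

lemma exists_nonzero_extensions_isPrefix (hπ : MonomialPresentation K π)
    (hprol : RightProlongable K π) {D : ℕ} (hD : ∃ u : A, IsMono K π u ∧ u ≠ 0 ∧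
      {v : A | IsMonoLen K π D v ∧ u * v ≠ 0}.Subsingleton) :
    ∃ q s : List σ, s.length = D ∧ π (wrd K (q ++ s)) ≠ 0 ∧
      ∀ m : List σ, m.length ≤ D → π (wrd K (q ++ m)) ≠ 0 → m <+: s := by
  obtain ⟨_, ⟨q, rfl⟩, hq, hsub⟩ := hD
  obtain ⟨s, hslen, hs⟩ := hprol.exists_append_ne_zero hq D
  refine ⟨q, s, hslen, hs, fun m hm hqm => ?_⟩
  obtain ⟨r, hrlen, hr⟩ := hprol.exists_append_ne_zero hqm (D - m.length)
  rw [List.append_assoc, map_wrd_append] at hr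
  rw [map_wrd_append] at hs
  have hmr : π (wrd K (m ++ r)) = π (wrd K s) :=
    hsub ⟨⟨m ++ r, by simp; omega, rfl⟩, hr⟩ ⟨⟨s, hslen, rfl⟩, hs⟩
  exact ⟨r, hπ.eq_of_map_wrd_eq hmr (right_ne_zero_of_mul hr)⟩

variable (π) in
def wordSpan (E : ℕ) : Submodule K A :=
  Submodule.span K ((fun w => π (wrd K w)) '' {w | w.length ≤ E})

variable (π) in
lemma wordSpan_mono : Monotone (wordSpan π) :=
  fun _ _ hEE' => Submodule.span_mono (Set.image_mono fun _ hw => le_trans hw hEE')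

lemma iSup_wordSpan (hπ : Function.Surjective π) : ⨆ E, wordSpan π E = ⊤ := by
  have htop : (⊤ : Submodule K A) = Submodule.map π.toLinearMap
      (Submodule.span K (Set.range (MonoidAlgebra.basis (FreeMonoid σ) K))) := by
    rw [Module.Basis.span_eq, Submodule.map_top, LinearMap.range_eq_top.2 hπ]
  rw [eq_top_iff, htop, Submodule.map_span, Submodule.span_le]
  rintro _ ⟨_, ⟨x, rfl⟩, rfl⟩
  exact Submodule.mem_iSup_of_mem _
    (Submodule.subset_span ⟨x.toList, (le_refl _ : x.toList.length ≤ _), rfl⟩)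

lemma exists_le_wordSpan_of_fg (hπ : Function.Surjective π) {V : Submodule K A}
    (hV : V.FG) : ∃ E, V ≤ wordSpan π E := by
  obtain ⟨_, ⟨E, rfl⟩, hE⟩ :=
    (CompleteLattice.isCompactElement_iff_le_of_directed_sSup_le _ V).1
      ((Submodule.fg_iff_compact V).1 hV) _ (Set.range_nonempty _)
      (wordSpan_mono π).directed_le.directedOn_range
      (by rw [sSup_range, iSup_wordSpan hπ]; exact le_top)
  exact ⟨E, hE⟩

variable (π) in
def prefixSpan (q s : List σ) (k : ℕ) : Submodule K A :=
  Submodule.span K (Set.range fun j : Fin k => π (wrd K (q ++ s.take j)))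

instance (q s : List σ) (k : ℕ) : FiniteDimensional K (prefixSpan π q s k) :=
  FiniteDimensional.span_of_finite K (Set.finite_range _)

variable (π) in
lemma prefixSpan_mono (q s : List σ) {k l : ℕ} (hkl : k ≤ l) :
    prefixSpan π q s k ≤ prefixSpan π q s l :=
  Submodule.span_mono fun _ ⟨j, hj⟩ => ⟨Fin.castLE hkl j, hj⟩

lemma finrank_prefixSpan (hπ : MonomialPresentation K π) {q s : List σ}
    (hs : π (wrd K (q ++ s)) ≠ 0) {k : ℕ} (hk : k ≤ s.length) :
    finrank K (prefixSpan π q s k) = k := by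
  have hlen (j : Fin k) : (q ++ s.take j).length = q.length + j := by simp; omega
  have hli : LinearIndependent K fun j : Fin k => π (wrd K (q ++ s.take j)) := by
    refine hπ.linearIndependent (fun i j hij => Fin.ext ?_) fun j => ?_
    · simpa [hlen] using congrArg List.length hij
    · rw [← List.take_append_drop j s, ← List.append_assoc] at hs
      exact map_wrd_ne_zero_of_append π hs
  rw [prefixSpan, finrank_span_eq_card hli, Fintype.card_fin]

lemma prefixSpan_mul_wordSpan_le {q s : List σ} {k E : ℕ}
    (hpre : ∀ m : List σ, m.length ≤ k + E → π (wrd K (q ++ m)) ≠ 0 → m <+: s) :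
    prefixSpan π q s k * wordSpan π E ≤ prefixSpan π q s (k + E) := by
  rw [prefixSpan, wordSpan, Submodule.span_mul_span, Submodule.span_le]
  rintro _ ⟨_, ⟨i, rfl⟩, _, ⟨m, hm, rfl⟩, rfl⟩
  dsimp only
  rw [← map_wrd_append, List.append_assoc]
  by_cases hz : π (wrd K (q ++ (s.take i ++ m))) = 0
  · rw [SetLike.mem_coe, hz]
    exact zero_mem _
  have hlen : (s.take i ++ m).length < k + E := by
    have hmE : m.length ≤ E := hm
    simp only [List.length_append, List.length_take]
    omega
  rw [List.prefix_iff_eq_take.1 (hpre _ hlen.le hz)]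
  exact Submodule.subset_span ⟨⟨_, hlen⟩, rfl⟩

end MonomialAlgebra

section IsoProfile

variable {K : Type} [Field K] {A : Type} [Ring A] [Algebra K A]

lemma isoProfile_le_finrank_sub {V W W' : Submodule K A} [FiniteDimensional K W']
    (hW : W ⊔ W * V ≤ W') : isoProfile K V (finrank K W) ≤ finrank K W' - finrank K W := by
  have : FiniteDimensional K W := Submodule.finiteDimensional_of_le (le_sup_left.trans hW)
  have : FiniteDimensional K ↥(W ⊔ W * V) := Submodule.finiteDimensional_of_le hW
  refine (Nat.sInf_le ?_).trans (Nat.sub_le_sub_right (Submodule.finrank_mono hW) _)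
  exact ⟨W, inferInstance, rfl, inferInstance, rfl⟩

end IsoProfile

theorem stmt3_general (K : Type) [Field K] (d : ℕ)
    (A : Type) [Ring A] [Algebra K A] (π : FreeAlg K (Fin d) →ₐ[K] A)
    (hπ : MonomialPresentation K π) (hprol : RightProlongable K π)
    (hcond : ∀ D : ℕ, ∃ u : A, IsMono K π u ∧ u ≠ 0 ∧
      {v : A | IsMonoLen K π D v ∧ u * v ≠ 0}.Subsingleton) :
    ∀ V : Submodule K A, FiniteDimensional K V → (1 : A) ∈ V →
      Algebra.adjoin K (V : Set A) = ⊤ →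
      ∃ C : ℕ, ∀ n : ℕ, 1 ≤ n → isoProfile K V n ≤ C := by
  intro V hV _ _
  obtain ⟨E, hVE⟩ :=
    exists_le_wordSpan_of_fg hπ.1 ((Submodule.fg_iff_finiteDimensional V).2 hV)
  refine ⟨E, fun n _ => ?_⟩
  obtain ⟨q, s, hslen, hs, hpre⟩ := exists_nonzero_extensions_isPrefix hπ hprol (hcond (n + E))
  have hsup : prefixSpan π q s n ⊔ prefixSpan π q s n * V ≤ prefixSpan π q s (n + E) :=
    sup_le (prefixSpan_mono π q s le_self_add)
      ((mul_le_mul_right hVE _).trans (prefixSpan_mul_wordSpan_le hpre))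
  have hprofile := isoProfile_le_finrank_sub hsup
  rwa [finrank_prefixSpan hπ hs (by omega), finrank_prefixSpan hπ hs hslen.ge,
    Nat.add_sub_cancel_left] at hprofile

/-- constant isoperimetric profile. Let `A` be a right prolongable
monomial algebra over a field `K` such that for every `D ∈ ℕ` there is a nonzero monomial
`u` of `A` with at most one length-`D` monomial `v` satisfying `u * v ≠ 0`. Then for every
finite-dimensional generating subspace `V ≤ A` with `1 ∈ V` the isoperimetric profile
`I_{A,V}` is bounded by a constant. -/
theorem stmt3 (K : Type) [Field K] (d : ℕ) (hd : 1 ≤ d)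
    (A : Type) [Ring A] [Algebra K A] (π : FreeAlg K (Fin d) →ₐ[K] A)
    (hπ : MonomialPresentation K π) (hprol : RightProlongable K π)
    (hcond : ∀ D : ℕ, ∃ u : A, IsMono K π u ∧ u ≠ 0 ∧
      {v : A | IsMonoLen K π D v ∧ u * v ≠ 0}.Subsingleton) :
    ∀ V : Submodule K A, FiniteDimensional K V → (1 : A) ∈ V →
      Algebra.adjoin K (V : Set A) = ⊤ →
      ∃ C : ℕ, ∀ n : ℕ, 1 ≤ n → isoProfile K V n ≤ C :=
  stmt3_general K d A π hπ hprol hcond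

end Paper
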